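/- arXiv:1311.0974 — 2 statements merged into one kernel-verified Lean document; each statement's English description precedes it below -/
import Mathlib

section
/- Let p be a prime and let 𝔽̄_p be an algebraic closure of the field with p elements. The ring W(𝔽̄_p) of p-typical Witt vectors admits a unique lift of the Frobenius: if φ : W(𝔽̄_p) → W(𝔽̄_p) is any ring homomorphism satisfying φ(x) ≡ x^p (mod p·W(𝔽̄_p)) for all x, then φ equals the Witt vector Frobenius endomorphism of W(𝔽̄_p). -/
/-!
Both `φ` and the Witt vector Frobenius reduce to `x ↦ x ^ p` modulo `p`. On a Teichmüller
representative `[a] = [b] ^ (p ^ n)` this congruence improves to one modulo `p ^ (n + 1)`, so by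
`p`-adic separatedness `φ [a] = [a] ^ p = [a ^ p]`, which is also the Frobenius of `[a]`. A ring
map out of `W(k)` into a `p`-adically separated ring is determined by its values on Teichmüller
representatives, since every Witt vector is a `p`-adic series of such representatives.
-/

theorem IsHausdorff.eq_of_forall_pow_dvd_sub {S : Type*} [CommRing S] {a : S}
    [IsHausdorff (Ideal.span {a}) S] {x y : S} (h : ∀ n : ℕ, a ^ n ∣ x - y) : x = y := by
  rw [IsHausdorff.eq_iff_smodEq (I := Ideal.span {a})]
  intro n
  simpa [SModEq.sub_mem, Ideal.span_singleton_pow, Ideal.mem_span_singleton] using h n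

theorem pow_succ_dvd_map_pow_pow_sub {R : Type*} [CommRing R] {p : ℕ} (φ : R →+* R)
    (hφ : ∀ x, (p : R) ∣ φ x - x ^ p) (b : R) (n : ℕ) :
    (p : R) ^ (n + 1) ∣ φ (b ^ p ^ n) - (b ^ p ^ n) ^ p := by
  have h := dvd_sub_pow_of_dvd_sub (hφ b) n
  rwa [← pow_mul, mul_comm, pow_mul, ← map_pow] at h

namespace WittVector

variable {p : ℕ} [Fact p.Prime] {k : Type*} [CommRing k] [CharP k p]

theorem frobenius_teichmuller (a : k) :
    frobenius (teichmuller p a) = teichmuller p (a ^ p) := by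
  ext (_ | n)
  · rw [coeff_frobenius_charP, teichmuller_coeff_zero, teichmuller_coeff_zero]
  · rw [coeff_frobenius_charP, teichmuller_coeff_pos _ _ _ n.succ_pos,
      teichmuller_coeff_pos _ _ _ n.succ_pos, zero_pow (Fact.out : p.Prime).ne_zero]

variable [PerfectRing k p]

theorem ringHom_ext_teichmuller {S : Type*} [CommRing S] [IsHausdorff (Ideal.span {(p : S)}) S]
    {f g : WittVector p k →+* S} (h : ∀ a, f (teichmuller p a) = g (teichmuller p a)) :
    f = g := by
  refine DFunLike.coe_injective <| IsHausdorff.funext' (Ideal.span {(p : S)}) fun n x => ?_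
  have hnil : IsNilpotent (p : S ⧸ Ideal.span {(p : S)} ^ n) :=
    ⟨n, by rw [← map_natCast (Ideal.Quotient.mk _), ← map_pow, Ideal.Quotient.eq_zero_iff_mem,
      Ideal.span_singleton_pow]; exact Ideal.mem_span_singleton_self _⟩
  exact RingHom.congr_fun (eq_of_apply_teichmuller_eq ((Ideal.Quotient.mk _).comp f)
    ((Ideal.Quotient.mk _).comp g) hnil fun a => by simp [h]) x

theorem map_teichmuller_of_dvd_sub_pow (φ : WittVector p k →+* WittVector p k)
    (hφ : ∀ x, (p : WittVector p k) ∣ φ x - x ^ p) (a : k) :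
    φ (teichmuller p a) = teichmuller p (a ^ p) := by
  refine IsHausdorff.eq_of_forall_pow_dvd_sub (a := (p : WittVector p k)) fun n => ?_
  obtain ⟨b, rfl⟩ := (bijective_iterateFrobenius k p n).surjective a
  have h := pow_succ_dvd_map_pow_pow_sub φ hφ (teichmuller p b) n
  rw [← map_pow, ← map_pow] at h
  exact (pow_dvd_pow _ n.le_succ).trans h

theorem eq_frobenius_of_dvd_sub_pow (φ : WittVector p k →+* WittVector p k)
    (hφ : ∀ x, (p : WittVector p k) ∣ φ x - x ^ p) : φ = frobenius :=
  ringHom_ext_teichmuller fun a => by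
    rw [map_teichmuller_of_dvd_sub_pow φ hφ, frobenius_teichmuller]

end WittVector

/-- `W(𝔽̄_p)` admits a unique lift of the Frobenius: any ring endomorphism `φ` with
`φ x ≡ x ^ p (mod p)` for all `x` equals the Witt vector Frobenius. -/
theorem wittVector_frobenius_lift_unique (p : ℕ) [Fact p.Prime]
    (φ : WittVector p (AlgebraicClosure (ZMod p)) →+* WittVector p (AlgebraicClosure (ZMod p)))
    (hφ : ∀ x : WittVector p (AlgebraicClosure (ZMod p)),
      ∃ y : WittVector p (AlgebraicClosure (ZMod p)), φ x = x ^ p + p * y) :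
    φ = WittVector.frobenius :=
  WittVector.eq_frobenius_of_dvd_sub_pow φ fun x => by
    obtain ⟨y, hy⟩ := hφ x
    exact ⟨y, by rw [hy, add_sub_cancel_left]⟩
end

section
/- Let p be a prime, let A be a commutative ring on which multiplication by p is injective, let φ : A → A be a lift of the Frobenius, and let δ : A → A be the unique function with φ(a) = a^p + p·δ(a) for all a ∈ A. Let Φ : Ω_{A/ℤ} → Ω_{A/ℤ} be the ℤ-linear map induced by functoriality of Kähler differentials along φ. If the A-module Ω_{A/ℤ} is p-torsion-free (multiplication by p is injective on Ω_{A/ℤ}), then there exists a unique additive map τ : Ω_{A/ℤ} → Ω_{A/ℤ} such that p·τ(ω) = Φ(ω) for all ω ∈ Ω_{A/ℤ}, and this map satisfies τ(d(a)) = a^{p−1}·d(a) + d(δ(a)) for every a ∈ A. -/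
/-!
By the Leibniz rule, `φ a = a ^ p + p * δ a` gives
`d (φ a) = p • (a ^ (p - 1) • d a + d (δ a))`, so `Φ (a • d b) = φ a • d (φ b)` is divisible by
`p`. The elements `a • d b` generate `Ω[A⁄ℤ]` additively, hence `Φ` takes values in
`p • Ω[A⁄ℤ]`, and as `p` is a nonzerodivisor on `Ω[A⁄ℤ]`, dividing by `p` defines `τ` uniquely.
Dividing the displayed identity by `p` gives `τ (d a)`.
-/

theorem Derivation.map_pow_add_natCast_mul {R A M : Type*} [CommSemiring R] [CommRing A]
    [Algebra R A] [AddCommMonoid M] [Module A M] [Module R M] [IsScalarTower R A M]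
    (D : Derivation R A M) (n : ℕ) (a b : A) :
    D (a ^ n + n * b) = (n : A) • (a ^ (n - 1) • D a + D b) := by
  rw [map_add, Derivation.leibniz_pow, Derivation.leibniz, D.map_natCast, smul_zero, add_zero,
    smul_add, Nat.cast_smul_eq_nsmul A n (a ^ (n - 1) • D a), Nat.cast_smul_eq_nsmul]

theorem KaehlerDifferential.mem_of_forall_smul_D_mem {R A : Type*} [CommRing R] [CommRing A]
    [Algebra R A] (S : AddSubmonoid (Ω[A⁄R]))
    (hS : ∀ a b : A, a • KaehlerDifferential.D R A b ∈ S) (ω : Ω[A⁄R]) : ω ∈ S := by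
  have hω : ω ∈ Submodule.span A (Set.range (KaehlerDifferential.D R A)) := by
    rw [KaehlerDifferential.span_range_derivation]
    trivial
  induction hω using Submodule.closure_induction with
  | zero => exact S.zero_mem
  | add _ _ _ _ hx hy => exact S.add_mem hx hy
  | smul_mem a _ hx =>
    obtain ⟨b, rfl⟩ := hx
    exact hS a b

theorem AddMonoidHom.existsUnique_comp_eq_of_injective {L M N : Type*} [AddZeroClass L]
    [AddZeroClass M] [AddZeroClass N] (g : M →+ N) (hg : Function.Injective g) (f : L →+ N)
    (hf : ∀ x, ∃ y, g y = f x) : ∃! τ : L →+ M, ∀ x, g (τ x) = f x := by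
  choose t ht using hf
  refine ⟨⟨⟨t, hg (by simp [ht])⟩, fun x y => hg (by simp [ht])⟩, ht, fun σ hσ => ?_⟩
  ext x
  exact hg ((hσ x).trans (ht x).symm)

theorem frobenius_lift_cartier_inverse_general (p : ℕ)
    (A : Type*) [CommRing A]
    (φ : A →+* A)
    (δ : A → A) (hδ : ∀ a : A, φ a = a ^ p + p * δ a)
    (Φ : KaehlerDifferential ℤ A →ₗ[ℤ] KaehlerDifferential ℤ A)
    (hΦ : ∀ a b : A, Φ (a • KaehlerDifferential.D ℤ A b) =
      φ a • KaehlerDifferential.D ℤ A (φ b))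
    (hΩ : Function.Injective fun ω : KaehlerDifferential ℤ A => (p : A) • ω) :
    (∃! τ : KaehlerDifferential ℤ A →+ KaehlerDifferential ℤ A,
        ∀ ω : KaehlerDifferential ℤ A, (p : A) • τ ω = Φ ω) ∧
      ∀ τ : KaehlerDifferential ℤ A →+ KaehlerDifferential ℤ A,
        (∀ ω : KaehlerDifferential ℤ A, (p : A) • τ ω = Φ ω) →
        ∀ a : A, τ (KaehlerDifferential.D ℤ A a) =
          a ^ (p - 1) • KaehlerDifferential.D ℤ A a +
            KaehlerDifferential.D ℤ A (δ a) := by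
  set d := KaehlerDifferential.D ℤ A
  have hdφ (b : A) : d (φ b) = (p : A) • (b ^ (p - 1) • d b + d (δ b)) := by
    rw [hδ b, d.map_pow_add_natCast_mul]
  have hΦd (b : A) : Φ (d b) = d (φ b) := by
    simpa using hΦ 1 b
  let smulP := DistribSMul.toAddMonoidHom (Ω[A⁄ℤ]) (p : A)
  have hΦ_dvd (ω : Ω[A⁄ℤ]) : ∃ η, smulP η = Φ ω := by
    refine KaehlerDifferential.mem_of_forall_smul_D_mem
      ((AddMonoidHom.mrange smulP).comap Φ.toAddMonoidHom)
      (fun a b => ⟨φ a • (b ^ (p - 1) • d b + d (δ b)), ?_⟩) ω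
    change (p : A) • _ = Φ (a • d b)
    rw [hΦ, hdφ, smul_comm]
  refine ⟨smulP.existsUnique_comp_eq_of_injective hΩ Φ.toAddMonoidHom hΦ_dvd,
    fun τ hτ a => hΩ ?_⟩
  simp only [hτ, hΦd, hdφ]

/-- Let `φ` be a Frobenius lift on a `p`-torsion-free commutative ring `A`, with
`φ a = a ^ p + p * δ a`, and let `Φ` be the induced map on `Ω[A⁄ℤ]`. If `Ω[A⁄ℤ]` is
`p`-torsion-free, then there is a unique additive map `τ` with `p • τ ω = Φ ω` for all
`ω`, and it satisfies `τ (d a) = a ^ (p - 1) • d a + d (δ a)`. -/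
theorem frobenius_lift_cartier_inverse (p : ℕ) [Fact p.Prime]
    (A : Type*) [CommRing A] (hA : Function.Injective fun a : A => (p : A) * a)
    (φ : A →+* A) (hφ : ∀ a : A, ∃ b : A, φ a = a ^ p + p * b)
    (δ : A → A) (hδ : ∀ a : A, φ a = a ^ p + p * δ a)
    (Φ : KaehlerDifferential ℤ A →ₗ[ℤ] KaehlerDifferential ℤ A)
    (hΦ : ∀ a b : A, Φ (a • KaehlerDifferential.D ℤ A b) =
      φ a • KaehlerDifferential.D ℤ A (φ b))
    (hΩ : Function.Injective fun ω : KaehlerDifferential ℤ A => (p : A) • ω) :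
    (∃! τ : KaehlerDifferential ℤ A →+ KaehlerDifferential ℤ A,
        ∀ ω : KaehlerDifferential ℤ A, (p : A) • τ ω = Φ ω) ∧
      ∀ τ : KaehlerDifferential ℤ A →+ KaehlerDifferential ℤ A,
        (∀ ω : KaehlerDifferential ℤ A, (p : A) • τ ω = Φ ω) →
        ∀ a : A, τ (KaehlerDifferential.D ℤ A a) =
          a ^ (p - 1) • KaehlerDifferential.D ℤ A a +
            KaehlerDifferential.D ℤ A (δ a) :=
  frobenius_lift_cartier_inverse_general p A φ δ hδ Φ hΦ hΩ
end
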